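/- arXiv:math/0408190 — 9 statements merged into one kernel-verified Lean document; each statement's English description precedes it below -/
import Mathlib

section
/- Let E = (E⁰, E¹, d, r) be a topological graph (E⁰, E¹ locally compact Hausdorff spaces, d : E¹ → E⁰ a local homeomorphism, r : E¹ → E⁰ continuous). If a subset X of E⁰ is positively invariant (i.e., for every e ∈ E¹, d(e) ∈ X implies r(e) ∈ X), then its closure X̄ is also positively invariant. -/
open Set Topology

variable {E0 E1 : Type*} [TopologicalSpace E0] [TopologicalSpace E1]

/-- A set is positively invariant if the range of every edge with domain in it lies in it. -/
def PosInv (d r : E1 → E0) (X : Set E0) : Prop := ∀ e : E1, d e ∈ X → r e ∈ X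

/-- Sources: `E⁰ \ closure (r (E¹))`. -/
def Sce (r : E1 → E0) : Set E0 := (closure (Set.range r))ᶜ

/-- Vertices having a neighborhood with compact `r`-preimage. -/
def FinSet (r : E1 → E0) : Set E0 := {v | ∃ V ∈ 𝓝 v, IsCompact (r ⁻¹' V)}

/-- Regular vertices. -/
def Rg (r : E1 → E0) : Set E0 := FinSet r \ closure (Sce r)

/-- Singular vertices. -/
def Sg (r : E1 → E0) : Set E0 := (Rg r)ᶜ

/-- A set is negatively invariant if every regular vertex in it receives an edge from it. -/
def NegInv (d r : E1 → E0) (X : Set E0) : Prop :=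
  ∀ v ∈ X ∩ Rg r, ∃ e : E1, r e = v ∧ d e ∈ X

/-- Invariant = positively and negatively invariant. -/
def Invariant (d r : E1 → E0) (X : Set E0) : Prop := PosInv d r X ∧ NegInv d r X

/-- The chain condition for a finite path `(e 0, e 1, …, e n)` of edges:
`d (e k) = r (e (k+1))`. -/
def IsPath (d r : E1 → E0) {n : ℕ} (e : Fin (n + 1) → E1) : Prop :=
  ∀ i : Fin n, d (e i.castSucc) = r (e i.succ)

/-- The positive orbit `Orb⁺(v)`: ranges of finite paths with domain `v`. -/
def OrbPlus (d r : E1 → E0) (v : E0) : Set E0 :=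
  {v} ∪ {w | ∃ n : ℕ, ∃ e : Fin (n + 1) → E1,
    IsPath d r e ∧ d (e (Fin.last n)) = v ∧ r (e 0) = w}

/-- An infinite path of edges. -/
def IsInfPath (d r : E1 → E0) (e : ℕ → E1) : Prop := ∀ k : ℕ, d (e k) = r (e (k + 1))

/-- `S` is the negative orbit space `Orb⁻(v, e)` of some negative orbit `e` of `v`:
either `v` itself (when `v` is singular), or a finite path ending at a singular vertex
with range `v`, or an infinite path with range `v`. -/
def IsNegOrbitSet (d r : E1 → E0) (v : E0) (S : Set E0) : Prop :=
  (v ∈ Sg r ∧ S = {v}) ∨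
  (∃ n : ℕ, ∃ e : Fin (n + 1) → E1, IsPath d r e ∧ r (e 0) = v ∧
    d (e (Fin.last n)) ∈ Sg r ∧ S = insert v (Set.range (d ∘ e))) ∨
  (∃ e : ℕ → E1, IsInfPath d r e ∧ r (e 0) = v ∧ S = insert v (Set.range (d ∘ e)))

/-- The orbit space `Orb(v, e) = ⋃_{v' ∈ Orb⁻(v,e)} Orb⁺(v')`, expressed in terms of the
negative orbit space `S = Orb⁻(v, e)`. -/
def Orb (d r : E1 → E0) (S : Set E0) : Set E0 := ⋃ v ∈ S, OrbPlus d r v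

/-- A maximal head: a non-empty closed invariant set in which any two points can be
approximated by the positive orbit of a common vertex. -/
def MaximalHead (d r : E1 → E0) (X : Set E0) : Prop :=
  X.Nonempty ∧ IsClosed X ∧ Invariant d r X ∧
  ∀ v1 ∈ X, ∀ v2 ∈ X, ∀ V1 ∈ 𝓝 v1, ∀ V2 ∈ 𝓝 v2,
    ∃ w ∈ X, (OrbPlus d r w ∩ V1).Nonempty ∧ (OrbPlus d r w ∩ V2).Nonempty

/-- Hereditary set: `d (r⁻¹ (V)) ⊆ V`. -/
def Hereditary (d r : E1 → E0) (V : Set E0) : Prop := d '' (r ⁻¹' V) ⊆ V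

/-- Saturated set: every regular vertex all of whose received edges have domain in `V`
belongs to `V`. -/
def Saturated (d r : E1 → E0) (V : Set E0) : Prop :=
  ∀ v ∈ Rg r, d '' (r ⁻¹' {v}) ⊆ V → v ∈ V

/-- `H(V) = ⋃ₙ dⁿ ((rⁿ)⁻¹ (V))`. -/
def HSet (d r : E1 → E0) (V : Set E0) : Set E0 :=
  V ∪ {w | ∃ n : ℕ, ∃ e : Fin (n + 1) → E1,
    IsPath d r e ∧ r (e 0) ∈ V ∧ d (e (Fin.last n)) = w}

/-- The sequence `V₀ = V`, `V_{k+1} = V_k ∪ {v ∈ E⁰_rg : d (r⁻¹ (v)) ⊆ V_k}`. -/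
def SatSeq (d r : E1 → E0) (V : Set E0) : ℕ → Set E0
  | 0 => V
  | k + 1 => SatSeq d r V k ∪ {v | v ∈ Rg r ∧ d '' (r ⁻¹' {v}) ⊆ SatSeq d r V k}

/-- The saturation `S(V) = ⋃ₖ V_k`. -/
def SatSet (d r : E1 → E0) (V : Set E0) : Set E0 := ⋃ k, SatSeq d r V k

/-- Sources of the subgraph on a closed positively invariant set `X`, viewed in `E⁰`:
`X⁰_sce = X⁰ \ closure_{X⁰} (r (X¹))` where `X¹ = d⁻¹ (X⁰)`. -/
def SceIn (d r : E1 → E0) (X : Set E0) : Set E0 := X \ closure (r '' (d ⁻¹' X))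

/-- Vertices of the subgraph on `X` having a relative neighborhood with compact
`r`-preimage in `X¹ = d⁻¹(X⁰)`. -/
def FinIn (d r : E1 → E0) (X : Set E0) : Set E0 :=
  {v | v ∈ X ∧ ∃ V ∈ 𝓝 v, IsCompact (r ⁻¹' (V ∩ X) ∩ d ⁻¹' X)}

/-- Infinite receivers of the subgraph on `X`. -/
def InfIn (d r : E1 → E0) (X : Set E0) : Set E0 := X \ FinIn d r X

/-- Regular vertices of the subgraph on `X`. -/
def RgIn (d r : E1 → E0) (X : Set E0) : Set E0 := FinIn d r X \ closure (SceIn d r X)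

/-- Singular vertices of the subgraph on `X`. -/
def SgIn (d r : E1 → E0) (X : Set E0) : Set E0 := X \ RgIn d r X

theorem stmt0 [LocallyCompactSpace E0] [T2Space E0] [LocallyCompactSpace E1] [T2Space E1]
    (d r : E1 → E0) (hd : IsLocalHomeomorph d) (hr : Continuous r)
    (X : Set E0) (hX : PosInv d r X) :
    PosInv d r (closure X) := by
  intro e he
  obtain ⟨φ, hes, hφ⟩ := hd e
  rw [mem_closure_iff] at he ⊢
  intro W hW hrW
  have hopen : IsOpen (φ.target ∩ (φ.symm ⁻¹' (r ⁻¹' W))) :=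
    φ.continuousOn_symm.isOpen_inter_preimage φ.open_target (hW.preimage hr)
  have hde : d e ∈ φ.target ∩ (φ.symm ⁻¹' (r ⁻¹' W)) := by
    constructor
    · rw [hφ]; exact φ.map_source hes
    · show r (φ.symm (d e)) ∈ W
      rw [hφ, φ.left_inv hes]; exact hrW
  obtain ⟨x, hx, hxX⟩ := he _ hopen hde
  refine ⟨r (φ.symm x), hx.2, ?_⟩
  have hdx : d (φ.symm x) = x := by rw [hφ]; exact φ.right_inv hx.1
  exact hX _ (by rw [hdx]; exact hxX)
end

section
/- Let E be a topological graph and define E⁰_rg to be the set of vertices v having a neighborhood V with r⁻¹(V) compact and with v ∉ closure(E⁰ \ closure(r(E¹))). If a subset X of E⁰ is negatively invariant (for every v ∈ X ∩ E⁰_rg there exists e ∈ E¹ with r(e) = v and d(e) ∈ X), then the closure X̄ is also negatively invariant. -/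
open Set Topology

variable {E0 E1 : Type*} [TopologicalSpace E0] [TopologicalSpace E1]

theorem stmt1 [LocallyCompactSpace E0] [T2Space E0] [LocallyCompactSpace E1] [T2Space E1]
    (d r : E1 → E0) (hd : IsLocalHomeomorph d) (hr : Continuous r)
    (X : Set E0) (hX : NegInv d r X) :
    NegInv d r (closure X) := by
  rintro v ⟨hvX, hvRg⟩
  -- `Rg r` is open
  have hRgOpen : IsOpen (Rg r) := by
    rw [isOpen_iff_mem_nhds]
    rintro w ⟨⟨V, hV, hVc⟩, hw2⟩
    have h1 : FinSet r ∈ 𝓝 w := by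
      filter_upwards [interior_mem_nhds.mpr hV] with x hx
      exact ⟨V, mem_interior_iff_mem_nhds.mp hx, hVc⟩
    have h2 : (closure (Sce r))ᶜ ∈ 𝓝 w :=
      isClosed_closure.isOpen_compl.mem_nhds hw2
    filter_upwards [h1, h2] with x hx1 hx2 using ⟨hx1, hx2⟩
  obtain ⟨V, hV, hK⟩ := hvRg.1
  set U := Rg r ∩ interior V with hUdef
  have hUopen : IsOpen U := hRgOpen.inter isOpen_interior
  have hvU : v ∈ U := ⟨hvRg, mem_interior_iff_mem_nhds.mpr hV⟩
  set S := X ∩ U with hSdef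
  have hvS : v ∈ closure S := by
    have h := hUopen.inter_closure (t := X) ⟨hvU, hvX⟩
    rwa [inter_comm] at h
  have hNB : (𝓝[S] v).NeBot := mem_closure_iff_nhdsWithin_neBot.mp hvS
  -- `S` is nonempty so `E1` is nonempty
  obtain ⟨x0, hx0⟩ : S.Nonempty := hNB.nonempty_of_mem self_mem_nhdsWithin
  obtain ⟨e0, -, -⟩ := hX x0 ⟨hx0.1, hx0.2.1⟩
  haveI : Nonempty E1 := ⟨e0⟩
  classical
  -- choice of edges
  set ee : E0 → E1 := fun x =>
    if h : x ∈ X ∩ Rg r then (hX x h).choose else Classical.arbitrary E1 with heedef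
  have hee : ∀ x ∈ X ∩ Rg r, r (ee x) = x ∧ d (ee x) ∈ X := by
    intro x hx
    simp only [heedef, dif_pos hx]
    exact ⟨(hX x hx).choose_spec.1, (hX x hx).choose_spec.2⟩
  have hSmem : ∀ x ∈ S, x ∈ X ∩ Rg r := fun x hx => ⟨hx.1, hx.2.1⟩
  set L : Filter E1 := Filter.map ee (𝓝[S] v) with hLdef
  haveI : L.NeBot := Filter.map_neBot
  have hLK : L ≤ Filter.principal (r ⁻¹' V) := by
    rw [Filter.le_principal_iff, hLdef, Filter.mem_map]
    filter_upwards [self_mem_nhdsWithin] with x hx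
    have hr1 := (hee x (hSmem x hx)).1
    have : r (ee x) ∈ V := by
      rw [hr1]; exact interior_subset hx.2.2
    exact this
  obtain ⟨a, -, hac⟩ := hK hLK
  -- `r a = v`
  have hTr : Filter.Tendsto r L (𝓝 v) := by
    rw [hLdef, Filter.tendsto_map'_iff]
    have hid : Filter.Tendsto (fun x : E0 => x) (𝓝[S] v) (𝓝 v) :=
      nhdsWithin_le_nhds
    refine hid.congr' ?_
    filter_upwards [self_mem_nhdsWithin] with x hx
    exact ((hee x (hSmem x hx)).1).symm
  have hrav : r a = v :=
    eq_of_nhds_neBot (hac.map hr.continuousAt hTr)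
  -- `d a ∈ closure X`
  have hTd : Filter.Tendsto d L (Filter.principal X) := by
    rw [Filter.tendsto_principal, hLdef, Filter.eventually_map]
    filter_upwards [self_mem_nhdsWithin] with x hx
    exact (hee x (hSmem x hx)).2
  have hdaX : d a ∈ closure X :=
    mem_closure_iff_clusterPt.mpr (hac.map hd.continuous.continuousAt hTd)
  exact ⟨a, hrav, hdaX⟩
end

section
/- Let E be a topological graph and X⁰ a closed positively invariant subset of E⁰. Let X = (X⁰, X¹, d|, r|) be the subgraph with X¹ = d⁻¹(X⁰). Then the following are equivalent: (i) X⁰ is negatively invariant; (ii) X⁰_sce ∩ E⁰_rg = ∅ (no source of X is a regular vertex of E); (iii) X⁰_sg ⊆ E⁰_sg (every singular vertex of the subgraph X is singular in E). -/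
open Set Topology

variable {E0 E1 : Type*} [TopologicalSpace E0] [TopologicalSpace E1]

lemma finSet_isOpen (r : E1 → E0) : IsOpen (FinSet r) := by
  rw [isOpen_iff_mem_nhds]
  rintro v ⟨V, hV, hK⟩
  filter_upwards [interior_mem_nhds.mpr hV] with w hw
  exact ⟨V, mem_nhds_iff.mpr ⟨interior V, interior_subset, isOpen_interior, hw⟩, hK⟩

theorem stmt2 [LocallyCompactSpace E0] [T2Space E0] [LocallyCompactSpace E1] [T2Space E1]
    (d r : E1 → E0) (hd : IsLocalHomeomorph d) (hr : Continuous r)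
    (X : Set E0) (hXc : IsClosed X) (hXp : PosInv d r X) :
    (NegInv d r X ↔ SceIn d r X ∩ Rg r = ∅) ∧
    (NegInv d r X ↔ SgIn d r X ⊆ Sg r) := by
  have hdc : Continuous d := hd.continuous
  -- (i) ↔ (ii)
  have h12 : NegInv d r X ↔ SceIn d r X ∩ Rg r = ∅ := by
    constructor
    · intro hNeg
      rw [eq_empty_iff_forall_notMem]
      rintro v ⟨⟨hvX, hvc⟩, hvR⟩
      obtain ⟨e, hre, hde⟩ := hNeg v ⟨hvX, hvR⟩
      exact hvc (subset_closure ⟨e, hde, hre⟩)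
    · intro hE v hv
      by_contra hne
      push_neg at hne
      obtain ⟨hvX, hvF, hvc⟩ := hv
      obtain ⟨V, hV, hK⟩ := hvF
      set K : Set E0 := r '' (r ⁻¹' V ∩ d ⁻¹' X) with hKdef
      have hKcomp : IsCompact K :=
        (hK.inter_right (hXc.preimage hdc)).image hr
      have hvK : v ∉ K := by
        rintro ⟨e, ⟨-, hde⟩, hre⟩
        exact hne e hre hde
      have hW : interior V ∩ Kᶜ ∈ 𝓝 v :=
        Filter.inter_mem (interior_mem_nhds.mpr hV)
          (hKcomp.isClosed.isOpen_compl.mem_nhds hvK)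
      have hvSce : v ∈ SceIn d r X := by
        refine ⟨hvX, fun hcl => ?_⟩
        obtain ⟨w, ⟨hw1, hw2⟩, e, hde, hre⟩ := mem_closure_iff_nhds.mp hcl _ hW
        have heV : e ∈ r ⁻¹' V := by
          rw [mem_preimage, hre]; exact interior_subset hw1
        exact hw2 ⟨e, ⟨heV, hde⟩, hre⟩
      exact eq_empty_iff_forall_notMem.mp hE v ⟨hvSce, ⟨V, hV, hK⟩, hvc⟩
  refine ⟨h12, h12.trans ?_⟩
  constructor
  · intro hE v hvSg
    obtain ⟨hvX, hvR⟩ := hvSg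
    intro hvRg
    apply hvR
    obtain ⟨hvF, hvc⟩ := hvRg
    constructor
    · -- v ∈ FinIn
      obtain ⟨V, hV, hK⟩ := hvF
      refine ⟨hvX, V, hV, ?_⟩
      have : r ⁻¹' (V ∩ X) ∩ d ⁻¹' X = r ⁻¹' V ∩ (r ⁻¹' X ∩ d ⁻¹' X) := by
        ext e; simp [mem_preimage]; tauto
      rw [this]
      exact hK.inter_right ((hXc.preimage hr).inter (hXc.preimage hdc))
    · -- v ∉ closure (SceIn)
      intro hcl
      obtain ⟨w, hw1, hw2⟩ := mem_closure_iff_nhds.mp hcl _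
        (((finSet_isOpen r).sdiff isClosed_closure).mem_nhds ⟨hvF, hvc⟩)
      exact eq_empty_iff_forall_notMem.mp hE w ⟨hw2, hw1⟩
  · intro hS
    rw [eq_empty_iff_forall_notMem]
    rintro v ⟨hvSce, hvRg⟩
    have hvSg : v ∈ SgIn d r X := ⟨hvSce.1, fun hR => hR.2 (subset_closure hvSce)⟩
    exact hS hvSg hvRg
end

section
/- Let E be a topological graph and let X₁⁰, X₂⁰ be two closed invariant subsets of E⁰. Then X⁰ = X₁⁰ ∪ X₂⁰ is a closed invariant subset, X⁰_sce ⊆ (X₁⁰)_sce ∪ (X₂⁰)_sce, and X⁰_inf = (X₁⁰)_inf ∪ (X₂⁰)_inf. -/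
open Set Topology

variable {E0 E1 : Type*} [TopologicalSpace E0] [TopologicalSpace E1]

/-
A source of `X₁ ∪ X₂` is a source of whichever `Xᵢ` contains it, since
`r (d⁻¹ Xᵢ) ⊆ r (d⁻¹ (X₁ ∪ X₂))`. For the infinite receivers, passing from `X` to a closed
`Y ⊆ X` only cuts a closed piece out of a compact set of edges, so `Y_inf ⊆ X_inf`.
Conversely, if `v` is finite for each `Xᵢ` (vacuously so if `v ∉ Xᵢ`, via a closed
neighbourhood missing `Xᵢ`), then on the intersection `V` of the two closed neighbourhoods,
positive invariance turns `r⁻¹ (V ∩ X) ∩ d⁻¹ X` into `r⁻¹ V ∩ d⁻¹ X`, so the edges of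
`X₁ ∪ X₂` ending in `V` form a closed subset of the union of the two compact sets of edges.
-/

section

variable {E0 E1 : Type*} {d r : E1 → E0}

theorem PosInv.union {X1 X2 : Set E0} (h1 : PosInv d r X1) (h2 : PosInv d r X2) :
    PosInv d r (X1 ∪ X2) := by
  rintro e (he | he)
  · exact Or.inl (h1 e he)
  · exact Or.inr (h2 e he)

theorem PosInv.preimage_inter_eq {X : Set E0} (hX : PosInv d r X) (V : Set E0) :
    r ⁻¹' (V ∩ X) ∩ d ⁻¹' X = r ⁻¹' V ∩ d ⁻¹' X := by
  ext e
  exact ⟨fun ⟨⟨hV, _⟩, hd⟩ => ⟨hV, hd⟩, fun ⟨hV, hd⟩ => ⟨⟨hV, hX e hd⟩, hd⟩⟩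

variable [TopologicalSpace E0]

theorem sceIn_inter_subset_of_subset {X Y : Set E0} (hYX : Y ⊆ X) :
    SceIn d r X ∩ Y ⊆ SceIn d r Y :=
  fun _ ⟨⟨_, hnc⟩, hv⟩ => ⟨hv, fun hc => hnc (closure_mono (image_mono (preimage_mono hYX)) hc)⟩

theorem sceIn_union_subset (X1 X2 : Set E0) :
    SceIn d r (X1 ∪ X2) ⊆ SceIn d r X1 ∪ SceIn d r X2 := by
  intro v hv
  rcases hv.1 with hv1 | hv2
  · exact Or.inl (sceIn_inter_subset_of_subset subset_union_left ⟨hv, hv1⟩)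
  · exact Or.inr (sceIn_inter_subset_of_subset subset_union_right ⟨hv, hv2⟩)

variable [TopologicalSpace E1]

theorem NegInv.union {X1 X2 : Set E0} (h1 : NegInv d r X1) (h2 : NegInv d r X2) :
    NegInv d r (X1 ∪ X2) := by
  rintro v ⟨hv | hv, hrg⟩
  · obtain ⟨e, he, hde⟩ := h1 v ⟨hv, hrg⟩
    exact ⟨e, he, Or.inl hde⟩
  · obtain ⟨e, he, hde⟩ := h2 v ⟨hv, hrg⟩
    exact ⟨e, he, Or.inr hde⟩

theorem Invariant.union {X1 X2 : Set E0} (h1 : Invariant d r X1) (h2 : Invariant d r X2) :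
    Invariant d r (X1 ∪ X2) :=
  ⟨h1.1.union h2.1, h1.2.union h2.2⟩

theorem infIn_subset_of_subset (hdc : Continuous d) (hr : Continuous r) {X Y : Set E0}
    (hYc : IsClosed Y) (hYX : Y ⊆ X) : InfIn d r Y ⊆ InfIn d r X := by
  rintro v ⟨hvY, hvF⟩
  refine ⟨hYX hvY, fun ⟨_, V, hV, hK⟩ => hvF ⟨hvY, V, hV, ?_⟩⟩
  have hcut : r ⁻¹' (V ∩ Y) ∩ d ⁻¹' Y = r ⁻¹' (V ∩ X) ∩ d ⁻¹' X ∩ (r ⁻¹' Y ∩ d ⁻¹' Y) := by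
    ext e
    simp only [mem_inter_iff, mem_preimage]
    exact ⟨fun ⟨⟨hV, hY⟩, hd⟩ => ⟨⟨⟨hV, hYX hY⟩, hYX hd⟩, hY, hd⟩,
      fun ⟨⟨⟨hV, _⟩, _⟩, hY, hd⟩ => ⟨⟨hV, hY⟩, hd⟩⟩
  exact hcut ▸ hK.inter_right ((hYc.preimage hr).inter (hYc.preimage hdc))

theorem exists_isClosed_nhds_of_notMem_infIn [RegularSpace E0] (hr : Continuous r)
    {X : Set E0} (hXc : IsClosed X) {v : E0} (hv : v ∉ InfIn d r X) :
    ∃ V ∈ 𝓝 v, IsClosed V ∧ IsCompact (r ⁻¹' (V ∩ X) ∩ d ⁻¹' X) := by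
  by_cases hvX : v ∈ X
  · obtain ⟨_, W, hW, hK⟩ : v ∈ FinIn d r X := not_not.mp fun h => hv ⟨hvX, h⟩
    obtain ⟨V, hV, hVc, hVW⟩ := exists_mem_nhds_isClosed_subset hW
    have hcut : r ⁻¹' (V ∩ X) ∩ d ⁻¹' X = r ⁻¹' (W ∩ X) ∩ d ⁻¹' X ∩ r ⁻¹' V := by
      ext e
      simp only [mem_inter_iff, mem_preimage]
      exact ⟨fun ⟨⟨hV, hX⟩, hd⟩ => ⟨⟨⟨hVW hV, hX⟩, hd⟩, hV⟩,
        fun ⟨⟨⟨_, hX⟩, hd⟩, hV⟩ => ⟨⟨hV, hX⟩, hd⟩⟩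
    exact ⟨V, hV, hVc, hcut ▸ hK.inter_right (hVc.preimage hr)⟩
  · obtain ⟨V, hV, hVc, hVX⟩ := exists_mem_nhds_isClosed_subset (hXc.isOpen_compl.mem_nhds hvX)
    have hempty : V ∩ X = ∅ := (subset_compl_iff_disjoint_right.mp hVX).inter_eq
    exact ⟨V, hV, hVc, by simp [hempty]⟩

theorem mem_finIn_union [RegularSpace E0] (hdc : Continuous d) (hr : Continuous r)
    {X1 X2 : Set E0} (h1c : IsClosed X1) (h2c : IsClosed X2)
    (h1 : PosInv d r X1) (h2 : PosInv d r X2) {v : E0} (hv : v ∈ X1 ∪ X2)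
    (hv1 : v ∉ InfIn d r X1) (hv2 : v ∉ InfIn d r X2) : v ∈ FinIn d r (X1 ∪ X2) := by
  obtain ⟨V1, hV1, hV1c, hK1⟩ := exists_isClosed_nhds_of_notMem_infIn hr h1c hv1
  obtain ⟨V2, hV2, hV2c, hK2⟩ := exists_isClosed_nhds_of_notMem_infIn hr h2c hv2
  rw [h1.preimage_inter_eq] at hK1
  rw [h2.preimage_inter_eq] at hK2
  refine ⟨hv, V1 ∩ V2, Filter.inter_mem hV1 hV2, ?_⟩
  rw [(h1.union h2).preimage_inter_eq]
  refine (hK1.union hK2).of_isClosed_subset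
    (((hV1c.inter hV2c).preimage hr).inter ((h1c.union h2c).preimage hdc)) ?_
  rintro e ⟨⟨hev1, hev2⟩, hd1 | hd2⟩
  · exact Or.inl ⟨hev1, hd1⟩
  · exact Or.inr ⟨hev2, hd2⟩

theorem infIn_union [RegularSpace E0] (hdc : Continuous d) (hr : Continuous r)
    {X1 X2 : Set E0} (h1c : IsClosed X1) (h2c : IsClosed X2)
    (h1 : PosInv d r X1) (h2 : PosInv d r X2) :
    InfIn d r (X1 ∪ X2) = InfIn d r X1 ∪ InfIn d r X2 := by
  refine subset_antisymm (fun v ⟨hv, hvF⟩ => ?_) (union_subset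
    (infIn_subset_of_subset hdc hr h1c subset_union_left)
    (infIn_subset_of_subset hdc hr h2c subset_union_right))
  by_contra hv12
  rw [mem_union, not_or] at hv12
  exact hvF (mem_finIn_union hdc hr h1c h2c h1 h2 hv hv12.1 hv12.2)

end

theorem stmt3_general [LocallyCompactSpace E0] [T2Space E0]
    (d r : E1 → E0) (hd : IsLocalHomeomorph d) (hr : Continuous r)
    (X1 X2 : Set E0) (h1c : IsClosed X1) (h2c : IsClosed X2)
    (h1 : Invariant d r X1) (h2 : Invariant d r X2) :
    IsClosed (X1 ∪ X2) ∧ Invariant d r (X1 ∪ X2) ∧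
    SceIn d r (X1 ∪ X2) ⊆ SceIn d r X1 ∪ SceIn d r X2 ∧
    InfIn d r (X1 ∪ X2) = InfIn d r X1 ∪ InfIn d r X2 :=
  ⟨h1c.union h2c, h1.union h2, sceIn_union_subset X1 X2,
    infIn_union hd.continuous hr h1c h2c h1.1 h2.1⟩

theorem stmt3 [LocallyCompactSpace E0] [T2Space E0] [LocallyCompactSpace E1] [T2Space E1]
    (d r : E1 → E0) (hd : IsLocalHomeomorph d) (hr : Continuous r)
    (X1 X2 : Set E0) (h1c : IsClosed X1) (h2c : IsClosed X2)
    (h1 : Invariant d r X1) (h2 : Invariant d r X2) :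
    IsClosed (X1 ∪ X2) ∧ Invariant d r (X1 ∪ X2) ∧
    SceIn d r (X1 ∪ X2) ⊆ SceIn d r X1 ∪ SceIn d r X2 ∧
    InfIn d r (X1 ∪ X2) = InfIn d r X1 ∪ InfIn d r X2 :=
  stmt3_general d r hd hr X1 X2 h1c h2c h1 h2
end

section
/- Let E be a topological graph and v ∈ E⁰. Then the closure of the positive orbit, X⁰ = closure(Orb⁺(v)), is positively invariant; moreover X⁰ is negatively invariant whenever at least one of the following holds: (i) v ∈ E⁰_sg; (ii) v is not an isolated point of Orb⁺(v); (iii) v is the base point of a loop (i.e., there exists n ≥ 1 and e ∈ Eⁿ with dⁿ(e) = rⁿ(e) = v). -/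
open Set Topology

variable {E0 E1 : Type*} [TopologicalSpace E0] [TopologicalSpace E1]

/-!
Positive invariance of `Orb⁺(v)` passes to its closure because `d` is open and `r` continuous.
For negative invariance, every point of `Orb⁺(v)` other than `v` receives an edge from the orbit,
and since a regular vertex has a neighbourhood with compact `r`-preimage, a regular limit `w` of
such points receives an edge whose domain is a limit of points of the orbit. What remains is
the case that `w = v` is isolated from the rest of the orbit, which each of (i)–(iii) handles
directly: (i) and (ii) exclude it, and in (iii) the first edge of the loop is received by `v`.
-/

section Topology

variable {X Y : Type*} [TopologicalSpace X] [TopologicalSpace Y]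

lemma exists_mem_closure_of_mem_closure_image [T2Space Y] {r : X → Y} (hr : Continuous r)
    {s : Set X} {w : Y} (hw : ∃ V ∈ 𝓝 w, IsCompact (r ⁻¹' V)) (h : w ∈ closure (r '' s)) :
    ∃ e ∈ closure s, r e = w := by
  obtain ⟨V, hV, hK⟩ := hw
  have hcpt : IsCompact (r ⁻¹' V ∩ closure (s ∩ r ⁻¹' V)) := hK.inter_right isClosed_closure
  have hw' : w ∈ closure (r '' (s ∩ r ⁻¹' V)) := by
    rw [image_inter_preimage, mem_closure_iff_nhds]
    intro U hU
    obtain ⟨y, ⟨hyU, hyV⟩, hys⟩ := mem_closure_iff_nhds.1 h (U ∩ V) (Filter.inter_mem hU hV)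
    exact ⟨y, hyU, hys, hyV⟩
  have hsub : r '' (s ∩ r ⁻¹' V) ⊆ r '' (r ⁻¹' V ∩ closure (s ∩ r ⁻¹' V)) :=
    image_mono fun e he => ⟨he.2, subset_closure he⟩
  obtain ⟨e, ⟨-, he⟩, rfl⟩ := (hcpt.image hr).isClosed.closure_subset_iff.2 hsub hw'
  exact ⟨e, closure_mono inter_subset_left he, rfl⟩

lemma mem_closure_sdiff_singleton_or_eq [T1Space X] {s : Set X} {v w : X}
    (h : w ∈ closure s) : w ∈ closure (s \ {v}) ∨ w = v := by
  have : w ∈ closure ({v} ∪ s \ {v}) := closure_mono (subset_insert_sdiff_singleton v s) h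
  rw [closure_union, closure_singleton] at this
  exact this.symm

lemma exists_mem_nhds_inter_subset_singleton {s : Set X} {v : X}
    (h : v ∉ closure (s \ {v})) : ∃ U ∈ 𝓝 v, U ∩ s ⊆ {v} := by
  refine ⟨(closure (s \ {v}))ᶜ, isClosed_closure.isOpen_compl.mem_nhds h, ?_⟩
  rintro x ⟨hx, hxs⟩
  by_contra hxv
  exact hx (subset_closure ⟨hxs, hxv⟩)

end Topology

section Orbit

variable {d r : E1 → E0}

omit [TopologicalSpace E0] [TopologicalSpace E1] in
lemma IsPath.d_zero_mem_orbPlus {v : E0} {n : ℕ} {p : Fin (n + 1) → E1}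
    (hp : IsPath d r p) (hlast : d (p (Fin.last n)) = v) : d (p 0) ∈ OrbPlus d r v := by
  cases n with
  | zero => exact Or.inl hlast
  | succ m =>
    refine Or.inr ⟨m, p ∘ Fin.succ, fun i => ?_, ?_, (hp 0).symm⟩
    · simpa only [Function.comp_apply, Fin.succ_castSucc] using hp i.succ
    · simpa only [Function.comp_apply, Fin.succ_last] using hlast

omit [TopologicalSpace E0] [TopologicalSpace E1] in
lemma sdiff_singleton_subset_image_orbPlus (v : E0) :
    OrbPlus d r v \ {v} ⊆ r '' (d ⁻¹' OrbPlus d r v) := by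
  rintro w ⟨hw | ⟨n, p, hp, hlast, hr0⟩, hwv⟩
  · exact absurd hw hwv
  · exact ⟨p 0, hp.d_zero_mem_orbPlus hlast, hr0⟩

omit [TopologicalSpace E0] [TopologicalSpace E1] in
lemma posInv_orbPlus (v : E0) : PosInv d r (OrbPlus d r v) := by
  rintro e (he | ⟨n, p, hp, hlast, hr0⟩)
  · exact Or.inr ⟨0, fun _ => e, fun i => i.elim0, he, rfl⟩
  · refine Or.inr ⟨n + 1, Fin.cons e p, fun i => ?_, ?_, congrArg r (Fin.cons_zero _ _)⟩
    · refine Fin.cases ?_ (fun j => ?_) i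
      · exact hr0.symm
      · simpa only [← Fin.succ_castSucc, Fin.cons_succ] using hp j
    · rwa [← Fin.succ_last, Fin.cons_succ]

lemma PosInv.closure (hd : IsOpenMap d) (hr : Continuous r) {O : Set E0} (hO : PosInv d r O) :
    PosInv d r (closure O) := by
  intro e he
  rw [mem_closure_iff]
  intro V hVo hVe
  obtain ⟨x, ⟨f, hfV, rfl⟩, hxO⟩ :=
    mem_closure_iff.1 he _ (hd _ (hVo.preimage hr)) (mem_image_of_mem d hVe)
  exact ⟨r f, hfV, hO f hxO⟩

lemma exists_edge_of_mem_closure_orbPlus_sdiff [T2Space E0] (hd : Continuous d)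
    (hr : Continuous r) {v w : E0} (hw : w ∈ FinSet r)
    (hcl : w ∈ closure (OrbPlus d r v \ {v})) :
    ∃ e, r e = w ∧ d e ∈ closure (OrbPlus d r v) := by
  obtain ⟨e, he, rfl⟩ := exists_mem_closure_of_mem_closure_image hr hw
    (closure_mono (sdiff_singleton_subset_image_orbPlus v) hcl)
  exact ⟨e, rfl, hd.closure_preimage_subset _ he⟩

end Orbit

theorem stmt5_general [T2Space E0]
    (d r : E1 → E0) (hd : IsLocalHomeomorph d) (hr : Continuous r)
    (v : E0) :
    PosInv d r (closure (OrbPlus d r v)) ∧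
    ((v ∈ Sg r ∨
      ¬ (∃ U ∈ 𝓝 v, U ∩ OrbPlus d r v ⊆ {v}) ∨
      (∃ n : ℕ, ∃ e : Fin (n + 1) → E1,
        IsPath d r e ∧ d (e (Fin.last n)) = v ∧ r (e 0) = v)) →
      NegInv d r (closure (OrbPlus d r v))) := by
  refine ⟨(posInv_orbPlus v).closure hd.isOpenMap hr, ?_⟩
  rintro hyp w ⟨hwX, hwRg⟩
  by_cases hw : w ∈ closure (OrbPlus d r v \ {v})
  · exact exists_edge_of_mem_closure_orbPlus_sdiff hd.continuous hr hwRg.1 hw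
  obtain rfl : w = v := (mem_closure_sdiff_singleton_or_eq hwX).resolve_left hw
  rcases hyp with hsg | hacc | ⟨n, p, hp, hlast, hr0⟩
  · exact absurd hwRg hsg
  · exact absurd (exists_mem_nhds_inter_subset_singleton hw) hacc
  · exact ⟨p 0, hr0, subset_closure (hp.d_zero_mem_orbPlus hlast)⟩

theorem stmt5 [LocallyCompactSpace E0] [T2Space E0] [LocallyCompactSpace E1] [T2Space E1]
    (d r : E1 → E0) (hd : IsLocalHomeomorph d) (hr : Continuous r)
    (v : E0) :
    PosInv d r (closure (OrbPlus d r v)) ∧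
    ((v ∈ Sg r ∨
      ¬ (∃ U ∈ 𝓝 v, U ∩ OrbPlus d r v ⊆ {v}) ∨
      (∃ n : ℕ, ∃ e : Fin (n + 1) → E1,
        IsPath d r e ∧ d (e (Fin.last n)) = v ∧ r (e 0) = v)) →
      NegInv d r (closure (OrbPlus d r v))) :=
  stmt5_general d r hd hr v
end

section
/- Let E be a topological graph. A subset X of E⁰ is invariant if and only if for each v ∈ X there exists a negative orbit e of v such that Orb(v, e) ⊆ X. -/
open Set Topology

variable {E0 E1 : Type*} [TopologicalSpace E0] [TopologicalSpace E1]

lemma path_mem_aux {d r : E1 → E0} {X : Set E0} (hX : PosInv d r X) {n : ℕ}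
    {e : Fin (n + 1) → E1} (he : IsPath d r e) (hlast : d (e (Fin.last n)) ∈ X) :
    ∀ i : Fin (n + 1), d (e i) ∈ X := by
  have key : ∀ j, j ≤ n → d (e ⟨n - j, by omega⟩) ∈ X := by
    intro j
    induction j with
    | zero => intro _; simpa [Fin.last] using hlast
    | succ j ih =>
      intro hj
      have h1 := ih (by omega)
      have h2 : r (e ⟨n - j, by omega⟩) ∈ X := hX _ h1
      have h3 := he ⟨n - (j + 1), by omega⟩
      have e1 : (Fin.castSucc ⟨n - (j + 1), by omega⟩ : Fin (n + 1)) =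
          ⟨n - (j + 1), by omega⟩ := by ext; simp
      have e2 : (Fin.succ ⟨n - (j + 1), by omega⟩ : Fin (n + 1)) =
          ⟨n - j, by omega⟩ := by ext; simp; omega
      rw [e1, e2] at h3
      rwa [h3]
  intro i
  have h := key (n - i.1) (by omega)
  have : (⟨n - (n - i.1), by omega⟩ : Fin (n + 1)) = i := by
    ext; simp; omega
  rwa [this] at h

lemma orbPlus_subset {d r : E1 → E0} {X : Set E0} (hX : PosInv d r X) {v : E0}
    (hv : v ∈ X) : OrbPlus d r v ⊆ X := by
  rintro w (hw | ⟨n, e, he, hlast, hr0⟩)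
  · rwa [mem_singleton_iff.mp hw]
  · have hlX : d (e (Fin.last n)) ∈ X := by rw [hlast]; exact hv
    rw [← hr0]
    exact hX _ (path_mem_aux hX he hlX 0)

lemma orb_subset {d r : E1 → E0} {X S : Set E0} (hX : PosInv d r X) (hS : S ⊆ X) :
    Orb d r S ⊆ X := by
  intro w hw
  simp only [Orb, mem_iUnion] at hw
  obtain ⟨v, hv, hw⟩ := hw
  exact orbPlus_subset hX (hS hv) hw

lemma self_mem_orb {d r : E1 → E0} {S : Set E0} {v : E0} (hv : v ∈ S) : v ∈ Orb d r S := by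
  simp only [Orb, mem_iUnion]
  exact ⟨v, hv, Or.inl rfl⟩

theorem stmt8 [LocallyCompactSpace E0] [T2Space E0] [LocallyCompactSpace E1] [T2Space E1]
    (d r : E1 → E0) (hd : IsLocalHomeomorph d) (hr : Continuous r)
    (X : Set E0) :
    Invariant d r X ↔
      ∀ v ∈ X, ∃ S : Set E0, IsNegOrbitSet d r v S ∧ Orb d r S ⊆ X := by
  classical
  constructor
  · rintro ⟨hpos, hneg⟩ v hv
    by_cases hvsg : v ∈ Sg r
    · refine ⟨{v}, Or.inl ⟨hvsg, rfl⟩, orb_subset hpos (by simpa using hv)⟩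
    · have hvrg : v ∈ Rg r := not_not.mp hvsg
      have hE1 : Nonempty E1 := ⟨(hneg v ⟨hv, hvrg⟩).choose⟩
      let g : E0 → E1 := fun w =>
        if h : w ∈ X ∩ Rg r then (hneg w h).choose else Classical.arbitrary E1
      have hg : ∀ w ∈ X ∩ Rg r, r (g w) = w ∧ d (g w) ∈ X := by
        intro w h
        simp only [g, dif_pos h]
        exact (hneg w h).choose_spec
      let vseq : ℕ → E0 := fun k => k.rec v (fun _ w => d (g w))
      have hv0 : vseq 0 = v := rfl
      have hvS : ∀ k, vseq (k + 1) = d (g (vseq k)) := fun _ => rfl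
      have inX : ∀ k, (∀ j < k, vseq j ∈ Rg r) → vseq k ∈ X := by
        intro k
        induction k with
        | zero => intro _; exact hv
        | succ k ih =>
          intro h
          have hk : vseq k ∈ X := ih fun j hj => h j (by omega)
          rw [hvS]
          exact (hg _ ⟨hk, h k (by omega)⟩).2
      by_cases hall : ∀ k, vseq k ∈ Rg r
      · -- infinite path
        have hkX : ∀ k, vseq k ∈ X := fun k => inX k fun j _ => hall j
        refine ⟨insert v (Set.range (d ∘ fun k => g (vseq k))),
          Or.inr (Or.inr ⟨fun k => g (vseq k), ?_, (hg v ⟨hv, hvrg⟩).1, rfl⟩),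
          orb_subset hpos ?_⟩
        · intro k
          exact ((hg _ ⟨hkX (k + 1), hall (k + 1)⟩).1).symm
        · rintro w (hw | ⟨k, hk⟩)
          · rwa [hw]
          · simp only [Function.comp] at hk
            rw [← hk]
            exact hkX (k + 1)
      · push_neg at hall
        have hex : ∃ k, vseq k ∉ Rg r := hall
        let n := Nat.find hex
        have hn : vseq n ∉ Rg r := Nat.find_spec hex
        have hmin : ∀ j < n, vseq j ∈ Rg r := fun j hj => not_not.mp (Nat.find_min hex hj)
        have hnpos : 0 < n := by
          rcases Nat.eq_zero_or_pos n with h | h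
          · exact absurd (h ▸ hn) (by rw [hv0]; exact not_not.mpr hvrg)
          · exact h
        obtain ⟨m, hm⟩ : ∃ m, n = m + 1 := ⟨n - 1, by omega⟩
        rw [hm] at hn hmin
        have hkX : ∀ k ≤ m + 1, vseq k ∈ X := fun k hk =>
          inX k fun j hj => hmin j (by omega)
        refine ⟨insert v (Set.range (d ∘ fun i : Fin (m + 1) => g (vseq i))),
          Or.inr (Or.inl ⟨m, fun i : Fin (m + 1) => g (vseq i), ?_, ?_, ?_, rfl⟩),
          orb_subset hpos ?_⟩
        · intro i
          have h1 : (i.castSucc : Fin (m + 1)).1 = i.1 := rfl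
          have h2 : (i.succ : Fin (m + 1)).1 = i.1 + 1 := rfl
          show d (g (vseq i.castSucc.1)) = r (g (vseq i.succ.1))
          rw [h1, h2, ((hg _ ⟨hkX (i.1 + 1) (by omega), hmin (i.1 + 1) (by omega)⟩).1),
            ← hvS]
        · exact (hg v ⟨hv, hvrg⟩).1
        · show d (g (vseq (Fin.last m).1)) ∈ Sg r
          simp only [Fin.val_last]
          rw [← hvS]
          exact hn
        · rintro w (hw | ⟨i, hi⟩)
          · rwa [hw]
          · simp only [Function.comp] at hi
            rw [← hi]
            show d (g (vseq i.1)) ∈ X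
            rw [← hvS]
            exact hkX (i.1 + 1) (by omega)
  · intro h
    constructor
    · intro f hf
      obtain ⟨S, hS, hOrb⟩ := h (d f) hf
      have hdfS : d f ∈ S := by
        rcases hS with ⟨_, rfl⟩ | ⟨n, e, _, _, _, rfl⟩ | ⟨e, _, _, rfl⟩ <;>
          simp
      have : r f ∈ Orb d r S := by
        simp only [Orb, mem_iUnion]
        exact ⟨d f, hdfS, Or.inr ⟨0, fun _ => f, fun i => i.elim0, rfl, rfl⟩⟩
      exact hOrb this
    · rintro v ⟨hvX, hvrg⟩
      obtain ⟨S, hS, hOrb⟩ := h v hvX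
      rcases hS with ⟨hsg, _⟩ | ⟨n, e, he, hr0, _, rfl⟩ | ⟨e, he, hr0, rfl⟩
      · exact absurd hvrg hsg
      · refine ⟨e 0, hr0, hOrb (self_mem_orb ?_)⟩
        exact Or.inr ⟨0, rfl⟩
      · refine ⟨e 0, hr0, hOrb (self_mem_orb ?_)⟩
        exact Or.inr ⟨0, rfl⟩
end

section
/- Let E be a topological graph and V an open subset of E⁰. Define V₀ = V and V_{k+1} = V_k ∪ {v ∈ E⁰_rg : d(r⁻¹(v)) ⊆ V_k}, and S(V) = ⋃_k V_k. Then S(V) is open, S(V) is the smallest saturated set containing V, and if V is hereditary then so is S(V). -/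
open Set Topology

variable {E0 E1 : Type*} [TopologicalSpace E0] [TopologicalSpace E1]

lemma rg_isOpen (r : E1 → E0) : IsOpen (Rg r) :=
  (finSet_isOpen r).sdiff isClosed_closure

lemma preimage_singleton_compact [T2Space E0] {r : E1 → E0} (hr : Continuous r)
    {v : E0} (hv : v ∈ FinSet r) : IsCompact (r ⁻¹' {v}) := by
  obtain ⟨W, hW, hK⟩ := hv
  exact hK.of_isClosed_subset (isClosed_singleton.preimage hr)
    (fun e he => by simpa using (by rw [Set.mem_preimage, he] at *; exact mem_of_mem_nhds hW))

lemma tube [T2Space E0] {r : E1 → E0} (hr : Continuous r) {v : E0} (hv : v ∈ FinSet r)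
    {U : Set E1} (hU : IsOpen U) (h : r ⁻¹' {v} ⊆ U) :
    ∃ N : Set E0, IsOpen N ∧ v ∈ N ∧ r ⁻¹' N ⊆ U := by
  obtain ⟨W, hW, hK⟩ := hv
  have hC : IsCompact (r '' (r ⁻¹' W \ U)) := ((hK.diff hU).image hr)
  refine ⟨interior W ∩ (r '' (r ⁻¹' W \ U))ᶜ, isOpen_interior.inter hC.isClosed.isOpen_compl,
    ⟨mem_interior_iff_mem_nhds.mpr hW, ?_⟩, ?_⟩
  · rintro ⟨e, ⟨_, heU⟩, hev⟩
    exact heU (h (by simp [hev]))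
  · rintro e ⟨heW, heC⟩
    by_contra heU
    exact heC ⟨e, ⟨Set.mem_preimage.mpr (interior_subset heW), heU⟩, rfl⟩

lemma satSeq_isOpen [T2Space E0] {d r : E1 → E0} (hdc : Continuous d) (hr : Continuous r)
    {V : Set E0} (hV : IsOpen V) : ∀ k, IsOpen (SatSeq d r V k) := by
  intro k
  induction k with
  | zero => exact hV
  | succ k ih =>
    refine ih.union ?_
    rw [isOpen_iff_mem_nhds]
    rintro v ⟨hvrg, hvd⟩
    have hsub : r ⁻¹' {v} ⊆ d ⁻¹' (SatSeq d r V k) := fun e he => hvd ⟨e, he, rfl⟩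
    obtain ⟨N, hNo, hvN, hN⟩ := tube hr hvrg.1 (ih.preimage hdc) hsub
    filter_upwards [((rg_isOpen r).inter hNo).mem_nhds ⟨hvrg, hvN⟩] with w ⟨hwrg, hwN⟩
    exact ⟨hwrg, fun x ⟨e, he, hex⟩ => hex ▸ hN (by simpa [Set.mem_preimage] using he ▸ hwN)⟩

lemma satSeq_mono (d r : E1 → E0) (V : Set E0) : Monotone (SatSeq d r V) :=
  monotone_nat_of_le_succ (fun k => Set.subset_union_left)

theorem stmt13 [LocallyCompactSpace E0] [T2Space E0] [LocallyCompactSpace E1] [T2Space E1]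
    (d r : E1 → E0) (hd : IsLocalHomeomorph d) (hr : Continuous r)
    (V : Set E0) (hV : IsOpen V) :
    IsOpen (SatSet d r V) ∧ Saturated d r (SatSet d r V) ∧ V ⊆ SatSet d r V ∧
    (∀ W : Set E0, Saturated d r W → V ⊆ W → SatSet d r V ⊆ W) ∧
    (Hereditary d r V → Hereditary d r (SatSet d r V)) := by
  have hdc : Continuous d := hd.continuous
  have hopen : ∀ k, IsOpen (SatSeq d r V k) := satSeq_isOpen hdc hr hV
  refine ⟨isOpen_iUnion hopen, ?_, ?_, ?_, ?_⟩
  · -- Saturated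
    intro v hvrg hsub
    have hKc : IsCompact (d '' (r ⁻¹' {v})) :=
      (preimage_singleton_compact hr hvrg.1).image hdc
    obtain ⟨k, hk⟩ := hKc.elim_directed_cover _ hopen hsub
      ((satSeq_mono d r V).directed_le)
    exact Set.mem_iUnion.mpr ⟨k + 1, Or.inr ⟨hvrg, hk⟩⟩
  · -- V ⊆ SatSet
    exact fun v hv => Set.mem_iUnion.mpr ⟨0, hv⟩
  · -- minimality
    intro W hWsat hVW
    have : ∀ k, SatSeq d r V k ⊆ W := by
      intro k
      induction k with
      | zero => exact hVW
      | succ k ih =>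
        rintro v (hv | ⟨hvrg, hvd⟩)
        · exact ih hv
        · exact hWsat v hvrg (hvd.trans ih)
    exact Set.iUnion_subset this
  · -- hereditary
    intro hher
    have : ∀ k, Hereditary d r (SatSeq d r V k) := by
      intro k
      induction k with
      | zero => exact hher
      | succ k ih =>
        rintro x ⟨e, he, hex⟩
        rcases he with hv | ⟨_, hvd⟩
        · exact Or.inl (ih ⟨e, hv, hex⟩)
        · exact Or.inl (hvd ⟨e, rfl, hex⟩)
    rintro x ⟨e, he, hex⟩
    obtain ⟨k, hk⟩ := Set.mem_iUnion.mp he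
    exact Set.mem_iUnion.mpr ⟨k, this k ⟨e, hk, hex⟩⟩
end

section
/- Let E be a topological graph, V₁, V₂ ⊆ E⁰, and X⁰ an invariant subset. Then X⁰ ∩ S(H(V₁)) ∩ S(H(V₂)) ≠ ∅ if and only if X⁰ ∩ H(V₁) ∩ H(V₂) ≠ ∅. -/
open Set Topology

variable {E0 E1 : Type*} [TopologicalSpace E0] [TopologicalSpace E1]

lemma her_HSet (d r : E1 → E0) (V : Set E0) : Hereditary d r (HSet d r V) := by
  rintro x ⟨e, he, rfl⟩
  rcases he with hV | ⟨n, p, hp, h0, hlast⟩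
  · exact Or.inr ⟨0, fun _ => e, fun i => i.elim0, hV, rfl⟩
  · refine Or.inr ⟨n + 1, Fin.snoc p e, ?_, ?_, ?_⟩
    · intro i
      refine Fin.lastCases ?_ (fun j => ?_) i
      · rw [Fin.snoc_castSucc, Fin.succ_last, Fin.snoc_last, hlast]
      · rw [Fin.snoc_castSucc, Fin.succ_castSucc, Fin.snoc_castSucc]
        exact hp j
    · have h00 : (Fin.snoc p e : Fin (n + 2) → E1) 0 = p 0 := by
        rw [← Fin.castSucc_zero, Fin.snoc_castSucc]
      rw [h00]
      exact h0
    · rw [Fin.snoc_last]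

lemma her_Sat (d r : E1 → E0) {W : Set E0} (hW : Hereditary d r W) :
    Hereditary d r (SatSet d r W) := by
  have aux : ∀ k (e : E1), r e ∈ SatSeq d r W k → d e ∈ SatSeq d r W k := by
    intro k
    induction k with
    | zero => exact fun e he => hW ⟨e, he, rfl⟩
    | succ k ih =>
      rintro e (he | ⟨_, hsub⟩)
      · exact Or.inl (ih e he)
      · exact Or.inl (hsub ⟨e, rfl, rfl⟩)
  rintro x ⟨e, he, rfl⟩
  obtain ⟨k, hk⟩ := mem_iUnion.mp he
  exact mem_iUnion.mpr ⟨k, aux k e hk⟩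

lemma negInv_inter {d r : E1 → E0} {X S : Set E0} (hX : NegInv d r X)
    (hS : Hereditary d r S) : NegInv d r (X ∩ S) := by
  rintro v ⟨⟨hvX, hvS⟩, hvR⟩
  obtain ⟨e, he1, he2⟩ := hX v ⟨hvX, hvR⟩
  exact ⟨e, he1, he2, hS ⟨e, mem_preimage.mpr (by rw [he1]; exact hvS), rfl⟩⟩

lemma satseq_meet {d r : E1 → E0} {X W : Set E0} (hX : NegInv d r X) :
    ∀ k v, v ∈ X → v ∈ SatSeq d r W k → (X ∩ W).Nonempty := by
  intro k
  induction k with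
  | zero => exact fun v hvX hv => ⟨v, hvX, hv⟩
  | succ k ih =>
    rintro v hvX (hv | ⟨hrg, hsub⟩)
    · exact ih v hvX hv
    · obtain ⟨e, her, hed⟩ := hX v ⟨hvX, hrg⟩
      exact ih (d e) hed (hsub ⟨e, mem_preimage.mpr (by rw [her]; rfl), rfl⟩)

theorem stmt16 [LocallyCompactSpace E0] [T2Space E0] [LocallyCompactSpace E1] [T2Space E1]
    (d r : E1 → E0) (hd : IsLocalHomeomorph d) (hr : Continuous r)
    (V1 V2 X : Set E0) (hX : Invariant d r X) :
    (X ∩ SatSet d r (HSet d r V1) ∩ SatSet d r (HSet d r V2)).Nonempty ↔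
    (X ∩ HSet d r V1 ∩ HSet d r V2).Nonempty := by
  have hsub : ∀ V : Set E0, V ⊆ SatSet d r V := fun V x hx => mem_iUnion.mpr ⟨0, hx⟩
  constructor
  · rintro ⟨v, ⟨hvX, hv1⟩, hv2⟩
    obtain ⟨k, hk⟩ := mem_iUnion.mp hv1
    have hX2 : NegInv d r (X ∩ SatSet d r (HSet d r V2)) :=
      negInv_inter hX.2 (her_Sat d r (her_HSet d r V2))
    obtain ⟨w, ⟨hwX, hwS2⟩, hwH1⟩ :=
      satseq_meet (W := HSet d r V1) hX2 k v ⟨hvX, hv2⟩ hk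
    obtain ⟨k', hk'⟩ := mem_iUnion.mp hwS2
    have hX1 : NegInv d r (X ∩ HSet d r V1) := negInv_inter hX.2 (her_HSet d r V1)
    obtain ⟨u, ⟨huX, huH1⟩, huH2⟩ :=
      satseq_meet (W := HSet d r V2) hX1 k' w ⟨hwX, hwH1⟩ hk'
    exact ⟨u, ⟨huX, huH1⟩, huH2⟩
  · rintro ⟨v, ⟨hvX, hv1⟩, hv2⟩
    exact ⟨v, ⟨hvX, hsub _ hv1⟩, hsub _ hv2⟩
end

section
/- Let E be a topological graph that is not topologically free. Then there exist a non-empty open subset V of E⁰ and a positive integer n such that every vertex in V is the base point of a simple loop in Eⁿ without entrances, and σ = r ∘ (d|_{r⁻¹(V)})⁻¹ is a well-defined continuous map V → V with σⁿ = id_V. -/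
open Set Topology

variable {E0 E1 : Type*} [TopologicalSpace E0] [TopologicalSpace E1]

/-!
A base point `v` of a loop without entrances receives exactly one edge; let `P v` be its
source. Walking backwards along the loops, `P` permutes the base points, all of which are
periodic, and `P` is an open map on them since `P '' O = d '' (r ⁻¹' O)`. The inverse `σ` of `P`
on its periodic points is locally `r ∘ s` for a local section `s` of `d`, so it is continuous
on the interior `W` of the set of base points. By the Baire category theorem some
`{x ∈ W | σ^[n] x = x}` has interior; on it the largest minimal period is attained on an open
set, and the forward `P`-orbit of that set is the required `V`.
-/

open Function

namespace Function

variable {α : Type*} {f : α → α} {x : α}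

/-- The inverse of `f` on `periodicPts f`; elsewhere it is the identity, as `0 - 1 = 0`. -/
noncomputable def periodicInv (f : α → α) (x : α) : α := f^[minimalPeriod f x - 1] x

theorem iterate_mem_periodicPts (hx : x ∈ periodicPts f) (n : ℕ) : f^[n] x ∈ periodicPts f :=
  mk_mem_periodicPts (minimalPeriod_pos_of_mem_periodicPts hx)
    ((isPeriodicPt_minimalPeriod f x).apply_iterate n)

theorem apply_periodicInv (hx : x ∈ periodicPts f) : f (periodicInv f x) = x := by
  rw [periodicInv, ← iterate_succ_apply' f, Nat.succ_eq_add_one,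
    Nat.sub_add_cancel (minimalPeriod_pos_of_mem_periodicPts hx), iterate_minimalPeriod]

theorem periodicInv_apply (hx : x ∈ periodicPts f) : periodicInv f (f x) = x := by
  rw [periodicInv, minimalPeriod_apply hx, ← iterate_succ_apply, Nat.succ_eq_add_one,
    Nat.sub_add_cancel (minimalPeriod_pos_of_mem_periodicPts hx), iterate_minimalPeriod]

theorem _root_.Set.MapsTo.periodicInv {s : Set α} (h : Set.MapsTo f s s) :
    Set.MapsTo (periodicInv f) s s :=
  fun _ hx => h.iterate _ hx

theorem mapsTo_periodicInv_periodicPts :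
    Set.MapsTo (periodicInv f) (periodicPts f) (periodicPts f) :=
  fun _ hx => iterate_mem_periodicPts hx _

theorem iterate_periodicInv_iterate (hx : x ∈ periodicPts f) (n : ℕ) :
    (periodicInv f)^[n] (f^[n] x) = x := by
  induction n with
  | zero => rfl
  | succ n ih =>
    rw [iterate_succ_apply, iterate_succ_apply' f,
      periodicInv_apply (iterate_mem_periodicPts hx n), ih]

theorem iterate_iterate_periodicInv (hx : x ∈ periodicPts f) (n : ℕ) :
    f^[n] ((periodicInv f)^[n] x) = x := by
  induction n with
  | zero => rfl
  | succ n ih =>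
    rw [iterate_succ_apply, iterate_succ_apply' (periodicInv f),
      apply_periodicInv (mapsTo_periodicInv_periodicPts.iterate n hx), ih]

theorem isPeriodicPt_periodicInv_iff (hx : x ∈ periodicPts f) {n : ℕ} :
    IsPeriodicPt (periodicInv f) n x ↔ IsPeriodicPt f n x := by
  refine ⟨fun h => ?_, fun h => ?_⟩
  · calc f^[n] x = f^[n] ((periodicInv f)^[n] x) := by rw [h.eq]
      _ = x := iterate_iterate_periodicInv hx n
  · calc (periodicInv f)^[n] x = (periodicInv f)^[n] (f^[n] x) := by rw [h.eq]
      _ = x := iterate_periodicInv_iterate hx n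

theorem mem_periodicPts_periodicInv (hx : x ∈ periodicPts f) :
    x ∈ periodicPts (periodicInv f) := by
  obtain ⟨n, hn, hxn⟩ := mem_periodicPts.1 hx
  exact mk_mem_periodicPts hn ((isPeriodicPt_periodicInv_iff hx).2 hxn)

theorem minimalPeriod_periodicInv (hx : x ∈ periodicPts f) :
    minimalPeriod (periodicInv f) x = minimalPeriod f x :=
  minimalPeriod_eq_minimalPeriod_iff.2 fun _ => isPeriodicPt_periodicInv_iff hx

end Function

theorem mapsTo_iUnion_image_iterate {α : Type*} (f : α → α) (s : Set α) :
    Set.MapsTo f (⋃ k, f^[k] '' s) (⋃ k, f^[k] '' s) := by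
  rintro _ ⟨_, ⟨k, rfl⟩, x, hx, rfl⟩
  exact Set.mem_iUnion.2 ⟨k + 1, x, hx, iterate_succ_apply' f k x⟩

section Topology

open Set Topology

variable {X : Type*} [TopologicalSpace X] [T2Space X] {f : X → X}

theorem exists_isOpen_forall_isPeriodicPt [BaireSpace X] {W : Set X} (hW : IsOpen W)
    (hne : W.Nonempty) (hf : ContinuousOn f W) (hmaps : MapsTo f W W)
    (hper : W ⊆ periodicPts f) :
    ∃ O ⊆ W, IsOpen O ∧ O.Nonempty ∧ ∃ n, 0 < n ∧ ∀ x ∈ O, IsPeriodicPt f n x := by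
  set Fix : ℕ → Set X := fun n => {x ∈ W | IsPeriodicPt f (n + 1) x}
  have hcover : ⋃ n, (closure (Fix n) ∪ Wᶜ) = univ := by
    refine eq_univ_of_forall fun x => mem_iUnion.2 ?_
    by_cases hx : x ∈ W
    · obtain ⟨n, hn, hxn⟩ := mem_periodicPts.1 (hper hx)
      refine ⟨n - 1, Or.inl (subset_closure ⟨hx, ?_⟩)⟩
      rwa [Nat.sub_add_cancel hn]
    · exact ⟨0, Or.inr hx⟩
  obtain ⟨x, hxW, hx⟩ := (dense_iUnion_interior_of_closed
    (fun n => isClosed_closure.union hW.isClosed_compl) hcover).inter_open_nonempty W hW hne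
  obtain ⟨n, hxn⟩ := mem_iUnion.1 hx
  set O := W ∩ interior (closure (Fix n) ∪ Wᶜ)
  have hO : IsOpen O := hW.inter isOpen_interior
  have hO_closure : O ⊆ closure (O ∩ Fix n) := by
    intro y hy
    refine hO.inter_closure ⟨hy, ?_⟩
    exact (interior_subset hy.2).resolve_right (not_not_intro hy.1)
  have hfix : EqOn f^[n + 1] id O :=
    EqOn.of_subset_closure (fun y hy => hy.2.2) ((hf.iterate hmaps _).mono inter_subset_left)
      continuousOn_id inter_subset_left hO_closure
  exact ⟨O, inter_subset_left, hO, ⟨x, hxW, hxn⟩, n + 1, n.succ_pos, fun y hy => hfix hy⟩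

/-- The points of largest minimal period form an open set, since `f^[q] x ≠ x` is an open
condition. -/
theorem exists_isOpen_minimalPeriod_eq {O : Set X} (hO : IsOpen O) (hne : O.Nonempty)
    (hf : ∀ k, ContinuousOn f^[k] O) {n : ℕ} (hn : 0 < n) (hper : ∀ x ∈ O, IsPeriodicPt f n x) :
    ∃ V ⊆ O, IsOpen V ∧ V.Nonempty ∧ ∃ m, ∀ x ∈ V, minimalPeriod f x = m := by
  have hbdd : BddAbove (minimalPeriod f '' O) :=
    ⟨n, forall_mem_image.2 fun x hx => (hper x hx).minimalPeriod_le hn⟩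
  obtain ⟨x₀, hx₀, hm⟩ := Nat.sSup_mem (hne.image _) hbdd
  set m := sSup (minimalPeriod f '' O)
  refine ⟨{x ∈ O | minimalPeriod f x = m}, fun x hx => hx.1, ?_, ⟨x₀, hx₀, hm⟩, m,
    fun x hx => hx.2⟩
  refine isOpen_iff_mem_nhds.2 fun x ⟨hxO, hxm⟩ => ?_
  have hnot : ∀ᶠ y in 𝓝 x, ∀ q ∈ Finset.Ico 1 m, f^[q] y ≠ y := by
    refine (Filter.eventually_all_finset _).2 fun q hq => ?_
    have hq := Finset.mem_Ico.1 hq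
    refine ((hf q).continuousAt (hO.mem_nhds hxO)).ne_iff_eventually_ne continuousAt_id |>.1 ?_
    exact not_isPeriodicPt_of_pos_of_lt_minimalPeriod (by omega) (hxm ▸ hq.2)
  filter_upwards [hO.mem_nhds hxO, hnot] with y hyO hy
  refine ⟨hyO, le_antisymm (le_csSup hbdd (mem_image_of_mem _ hyO)) (not_lt.1 fun hlt => ?_)⟩
  have hpos := (hper y hyO).minimalPeriod_pos hn
  exact hy _ (Finset.mem_Ico.2 ⟨hpos, hlt⟩) (isPeriodicPt_minimalPeriod f y)

end Topology

section LoopBases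

open Set

variable {E₀ E₁ : Type*} {d r : E₁ → E₀}

def entrancelessLoopBases (d r : E₁ → E₀) : Set E₀ :=
  {v | ∃ n : ℕ, ∃ e : Fin (n + 1) → E₁,
    (∀ i : Fin (n + 1), d (e i) = r (e (i + 1))) ∧
    (∀ i : Fin (n + 1), ∀ f : E₁, r f = r (e i) → f = e i) ∧
    r (e 0) = v}

/-- On `entrancelessLoopBases d r` exactly one edge has range `v`, so the choice is irrelevant
there. -/
noncomputable def predVertex (d r : E₁ → E₀) (v : E₀) : E₀ :=
  open Classical in if h : ∃ f, r f = v then d h.choose else v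

theorem predVertex_range_eq {f : E₁} (h : ∀ f', r f' = r f → f' = f) :
    predVertex d r (r f) = d f := by
  have hex : ∃ f', r f' = r f := ⟨f, rfl⟩
  rw [predVertex, dif_pos hex, h _ hex.choose_spec]

theorem exists_range_eq_of_mem {v : E₀} (hv : v ∈ entrancelessLoopBases d r) :
    ∃ f, r f = v := by
  obtain ⟨n, e, -, -, rfl⟩ := hv
  exact ⟨e 0, rfl⟩

theorem eq_of_range_eq_of_mem {f f' : E₁} (hf : r f ∈ entrancelessLoopBases d r)
    (h : r f' = r f) : f' = f := by
  obtain ⟨n, e, -, hent, he⟩ := hf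
  rw [hent 0 f' (h.trans he.symm), hent 0 f he.symm]

theorem predVertex_range_eq_of_mem {f : E₁} (hf : r f ∈ entrancelessLoopBases d r) :
    predVertex d r (r f) = d f :=
  predVertex_range_eq fun _ h => eq_of_range_eq_of_mem hf h

open Fin.NatCast in
theorem iterate_predVertex_loop {n : ℕ} {e : Fin (n + 1) → E₁}
    (hpath : ∀ i, d (e i) = r (e (i + 1))) (hent : ∀ i f, r f = r (e i) → f = e i) (k : ℕ) :
    (predVertex d r)^[k] (r (e 0)) = r (e (k : Fin (n + 1))) := by
  induction k with
  | zero => rfl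
  | succ k ih =>
    rw [iterate_succ_apply', ih, predVertex_range_eq (hent _), hpath, Nat.cast_succ]

open Fin.NatCast in
theorem entrancelessLoopBases_subset_periodicPts :
    entrancelessLoopBases d r ⊆ periodicPts (predVertex d r) := by
  rintro _ ⟨n, e, hpath, hent, rfl⟩
  refine mk_mem_periodicPts n.succ_pos ?_
  rw [IsPeriodicPt, IsFixedPt, iterate_predVertex_loop hpath hent, Fin.natCast_self]

theorem mapsTo_predVertex_entrancelessLoopBases :
    MapsTo (predVertex d r) (entrancelessLoopBases d r) (entrancelessLoopBases d r) := by
  rintro _ ⟨n, e, hpath, hent, rfl⟩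
  exact ⟨n, fun i => e (i + 1), fun i => hpath (i + 1), fun i => hent (i + 1),
    ((predVertex_range_eq (hent 0)).trans (hpath 0)).symm⟩

theorem image_predVertex {O : Set E₀} (hO : O ⊆ entrancelessLoopBases d r) :
    predVertex d r '' O = d '' (r ⁻¹' O) := by
  ext x
  constructor
  · rintro ⟨v, hv, rfl⟩
    obtain ⟨f, rfl⟩ := exists_range_eq_of_mem (hO hv)
    exact ⟨f, hv, (predVertex_range_eq_of_mem (hO hv)).symm⟩
  · rintro ⟨f, hf, rfl⟩
    exact ⟨r f, hf, predVertex_range_eq_of_mem (hO hf)⟩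

/-- The loop consists of the edges entering `v, P v, …, P^[n] v`, where `P = predVertex d r`. -/
theorem exists_simple_loop {v : E₀} (hv : v ∈ entrancelessLoopBases d r) {n : ℕ}
    (hn : minimalPeriod (predVertex d r) v = n + 1) :
    ∃ e : Fin (n + 1) → E₁,
      (∀ i : Fin (n + 1), d (e i) = r (e (i + 1))) ∧
      Injective (fun i : Fin (n + 1) => r (e i)) ∧
      (∀ i : Fin (n + 1), ∀ f : E₁, r f = r (e i) → f = e i) ∧
      r (e 0) = v := by
  have hmem k := mapsTo_predVertex_entrancelessLoopBases.iterate k hv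
  choose g hg using fun k => exists_range_eq_of_mem (hmem k)
  refine ⟨fun i => g i, fun i => ?_, fun i j hij => ?_, fun i f hf => ?_, hg 0⟩
  · have hval : ((i + 1 : Fin (n + 1)) : ℕ) = (i + 1) % minimalPeriod (predVertex d r) v := by
      rw [hn, Fin.val_add, Fin.val_one', Nat.add_mod_mod]
    rw [hg, hval, iterate_mod_minimalPeriod_eq, iterate_succ_apply', ← hg,
      predVertex_range_eq_of_mem (hg i ▸ hmem i)]
  · refine Fin.ext (iterate_injOn_Iio_minimalPeriod ?_ ?_ ((hg i).symm.trans (hij.trans (hg j))))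
    · rw [mem_Iio, hn]; exact i.isLt
    · rw [mem_Iio, hn]; exact j.isLt
  · exact eq_of_range_eq_of_mem (hg i ▸ hmem i) hf

theorem periodicInv_predVertex_domain_eq {f : E₁} (hf : r f ∈ entrancelessLoopBases d r) :
    periodicInv (predVertex d r) (d f) = r f := by
  rw [← predVertex_range_eq_of_mem hf,
    periodicInv_apply (entrancelessLoopBases_subset_periodicPts hf)]

theorem existsUnique_edge_of_mapsTo_periodicInv {V : Set E₀}
    (hVL : V ⊆ entrancelessLoopBases d r) (hσV : MapsTo (periodicInv (predVertex d r)) V V)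
    {v : E₀} (hv : v ∈ V) : ∃! f, r f ∈ V ∧ d f = v := by
  obtain ⟨f, hf⟩ := exists_range_eq_of_mem (hVL (hσV hv))
  have hfL : r f ∈ entrancelessLoopBases d r := hf ▸ hVL (hσV hv)
  refine ⟨f, ⟨hf ▸ hσV hv, ?_⟩, fun g ⟨hgV, hgv⟩ => eq_of_range_eq_of_mem hfL ?_⟩
  · rw [← predVertex_range_eq_of_mem hfL, hf,
      apply_periodicInv (entrancelessLoopBases_subset_periodicPts (hVL hv))]
  · rw [← periodicInv_predVertex_domain_eq (hVL hgV), hgv, hf]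

end LoopBases

section TopologicalGraph

open Set Topology

variable {E₀ E₁ : Type*} [TopologicalSpace E₀] [TopologicalSpace E₁] {d r : E₁ → E₀}

theorem continuousOn_of_isLocalHomeomorph {σ : E₀ → E₀} {V : Set E₀} (hd : IsLocalHomeomorph d)
    (hr : Continuous r) (hV : IsOpen V) (hσ : ∀ f, r f ∈ V → σ (d f) = r f)
    (hex : ∀ v ∈ V, ∃ f, d f = v ∧ r f ∈ V) : ContinuousOn σ V := by
  intro v hv
  obtain ⟨f, rfl, hf⟩ := hex v hv
  obtain ⟨φ, hfφ, rfl⟩ := hd f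
  have hsymm : ContinuousAt φ.symm (φ f) := φ.continuousAt_symm (φ.map_source hfφ)
  have hrV : ∀ᶠ y in 𝓝 (φ f), r (φ.symm y) ∈ V := by
    refine (hr.continuousAt.comp hsymm).preimage_mem_nhds ?_
    rw [Function.comp_apply, φ.left_inv hfφ]
    exact hV.mem_nhds hf
  have hloc : r ∘ φ.symm =ᶠ[𝓝 (φ f)] σ := by
    filter_upwards [φ.open_target.mem_nhds (φ.map_source hfφ), hrV] with y hy hyV
    rw [Function.comp_apply, ← hσ _ hyV, φ.right_inv hy]
  exact ((hr.continuousAt.comp hsymm).congr hloc).continuousWithinAt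

theorem isOpen_image_predVertex (hd : IsOpenMap d) (hr : Continuous r) {O : Set E₀}
    (hO : IsOpen O) (hOL : O ⊆ entrancelessLoopBases d r) : IsOpen (predVertex d r '' O) :=
  image_predVertex hOL ▸ hd _ (hO.preimage hr)

theorem mapsTo_predVertex_interior (hd : IsOpenMap d) (hr : Continuous r) :
    MapsTo (predVertex d r) (interior (entrancelessLoopBases d r))
      (interior (entrancelessLoopBases d r)) := fun _ hv =>
  interior_maximal
    (mapsTo_predVertex_entrancelessLoopBases.mono_left interior_subset).image_subset
    (isOpen_image_predVertex hd hr isOpen_interior interior_subset) (mem_image_of_mem _ hv)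

theorem continuousOn_periodicInv_predVertex (hd : IsLocalHomeomorph d) (hr : Continuous r)
    {V : Set E₀} (hV : IsOpen V) (hVL : V ⊆ entrancelessLoopBases d r)
    (hσV : MapsTo (periodicInv (predVertex d r)) V V) :
    ContinuousOn (periodicInv (predVertex d r)) V := by
  refine continuousOn_of_isLocalHomeomorph hd hr hV
    (fun f hf => periodicInv_predVertex_domain_eq (hVL hf)) fun v hv => ?_
  obtain ⟨f, hf, hfv⟩ := (existsUnique_edge_of_mapsTo_periodicInv hVL hσV hv).exists
  exact ⟨f, hfv, hf⟩

theorem exists_isOpen_mapsTo_periodicInv_minimalPeriod_eq [BaireSpace E₀] [T2Space E₀]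
    (hd : IsLocalHomeomorph d) (hr : Continuous r)
    (hne : (interior (entrancelessLoopBases d r)).Nonempty) :
    ∃ V ⊆ entrancelessLoopBases d r, IsOpen V ∧ V.Nonempty ∧
      MapsTo (periodicInv (predVertex d r)) V V ∧
      ∃ n, ∀ v ∈ V, minimalPeriod (predVertex d r) v = n + 1 := by
  set P := predVertex d r
  set W := interior (entrancelessLoopBases d r)
  have hPW : MapsTo P W W := mapsTo_predVertex_interior hd.isOpenMap hr
  have hWper : W ⊆ periodicPts P := interior_subset.trans entrancelessLoopBases_subset_periodicPts
  have hcont := continuousOn_periodicInv_predVertex hd hr isOpen_interior interior_subset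
    hPW.periodicInv
  obtain ⟨O, hOW, hO, hOne, n, hn, hOper⟩ := exists_isOpen_forall_isPeriodicPt isOpen_interior
    hne hcont hPW.periodicInv fun x hx => mem_periodicPts_periodicInv (hWper hx)
  obtain ⟨V₀, hV₀O, hV₀, ⟨x₀, hx₀⟩, m, hm⟩ := exists_isOpen_minimalPeriod_eq hO hOne
    (fun k => (hcont.iterate hPW.periodicInv k).mono hOW) hn hOper
  have hV₀W : V₀ ⊆ W := hV₀O.trans hOW
  have hPm : ∀ x ∈ V₀, minimalPeriod P x = m := fun x hx =>
    (minimalPeriod_periodicInv (hWper (hV₀W hx))).symm.trans (hm x hx)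
  have himage k : P^[k] '' V₀ ⊆ entrancelessLoopBases d r :=
    ((hPW.iterate k).mono_left hV₀W).image_subset.trans interior_subset
  -- `V₀` need not be invariant under `periodicInv P`, but its forward `P`-orbit is, and that
  -- orbit is still open because `P` is an open map on base points.
  refine ⟨⋃ k, P^[k] '' V₀, iUnion_subset himage, isOpen_iUnion fun k => ?_,
    ⟨x₀, mem_iUnion.2 ⟨0, x₀, hx₀, rfl⟩⟩, (mapsTo_iUnion_image_iterate P V₀).periodicInv,
    m - 1, ?_⟩
  · induction k with
    | zero => rwa [iterate_zero, image_id]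
    | succ k ih =>
      rw [iterate_succ', image_comp]
      exact isOpen_image_predVertex hd.isOpenMap hr ih (himage k)
  · rintro _ ⟨_, ⟨k, rfl⟩, x, hx, rfl⟩
    rw [minimalPeriod_apply_iterate (hWper (hV₀W hx)), hPm x hx,
      Nat.sub_add_cancel (hPm x₀ hx₀ ▸ minimalPeriod_pos_of_mem_periodicPts (hWper (hV₀W hx₀)))]

end TopologicalGraph

theorem stmt19_general [LocallyCompactSpace E0] [T2Space E0]
    (d r : E1 → E0) (hd : IsLocalHomeomorph d) (hr : Continuous r)
    (hnf : interior {v : E0 | ∃ n : ℕ, ∃ e : Fin (n + 1) → E1,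
        (∀ i : Fin (n + 1), d (e i) = r (e (i + 1))) ∧
        (∀ i : Fin (n + 1), ∀ f : E1, r f = r (e i) → f = e i) ∧
        r (e 0) = v} ≠ ∅) :
    ∃ V : Set E0, IsOpen V ∧ V.Nonempty ∧ ∃ n : ℕ,
      (∀ v ∈ V, ∃ e : Fin (n + 1) → E1,
        (∀ i : Fin (n + 1), d (e i) = r (e (i + 1))) ∧
        Function.Injective (fun i : Fin (n + 1) => r (e i)) ∧
        (∀ i : Fin (n + 1), ∀ f : E1, r f = r (e i) → f = e i) ∧
        r (e 0) = v) ∧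
      (∀ v ∈ V, ∃! f : E1, r f ∈ V ∧ d f = v) ∧
      ∃ σ : E0 → E0,
        (∀ v ∈ V, ∀ f : E1, r f ∈ V → d f = v → σ v = r f) ∧
        Set.MapsTo σ V V ∧ ContinuousOn σ V ∧
        ∀ v ∈ V, σ^[n + 1] v = v := by
  obtain ⟨V, hVL, hV, hVne, hσV, n, hn⟩ := exists_isOpen_mapsTo_periodicInv_minimalPeriod_eq
    hd hr (Set.nonempty_iff_ne_empty.2 hnf)
  refine ⟨V, hV, hVne, n, fun v hv => exists_simple_loop (hVL hv) (hn v hv),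
    fun v hv => existsUnique_edge_of_mapsTo_periodicInv hVL hσV hv,
    periodicInv (predVertex d r),
    fun v _ f hf hfv => hfv ▸ periodicInv_predVertex_domain_eq (hVL hf), hσV,
    continuousOn_periodicInv_predVertex hd hr hV hVL hσV, fun v hv => ?_⟩
  rw [← hn v hv, ← minimalPeriod_periodicInv (entrancelessLoopBases_subset_periodicPts (hVL hv))]
  exact iterate_minimalPeriod

theorem stmt19 [LocallyCompactSpace E0] [T2Space E0] [LocallyCompactSpace E1] [T2Space E1]
    (d r : E1 → E0) (hd : IsLocalHomeomorph d) (hr : Continuous r)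
    (hnf : interior {v : E0 | ∃ n : ℕ, ∃ e : Fin (n + 1) → E1,
        (∀ i : Fin (n + 1), d (e i) = r (e (i + 1))) ∧
        (∀ i : Fin (n + 1), ∀ f : E1, r f = r (e i) → f = e i) ∧
        r (e 0) = v} ≠ ∅) :
    ∃ V : Set E0, IsOpen V ∧ V.Nonempty ∧ ∃ n : ℕ,
      (∀ v ∈ V, ∃ e : Fin (n + 1) → E1,
        (∀ i : Fin (n + 1), d (e i) = r (e (i + 1))) ∧
        Function.Injective (fun i : Fin (n + 1) => r (e i)) ∧
        (∀ i : Fin (n + 1), ∀ f : E1, r f = r (e i) → f = e i) ∧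
        r (e 0) = v) ∧
      (∀ v ∈ V, ∃! f : E1, r f ∈ V ∧ d f = v) ∧
      ∃ σ : E0 → E0,
        (∀ v ∈ V, ∀ f : E1, r f ∈ V → d f = v → σ v = r f) ∧
        Set.MapsTo σ V V ∧ ContinuousOn σ V ∧
        ∀ v ∈ V, σ^[n + 1] v = v :=
  stmt19_general d r hd hr hnf
end
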